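/- arXiv:2511.10938 — 3 statements merged into one kernel-verified Lean document; each statement's English description precedes it below -/
import Mathlib

section
/- Let K ≥ 1, and for each arm i in an ordering L = (l_1,...,l_K) define the cascade reward r_L = Σ_{i=1}^K (1 - p_{l_i}) μ_{l_i} Π_{j=1}^{i-1} (1 - μ_{l_j}), where all μ_i, p_i ∈ [0,1]. If L' is obtained from L by swapping the arms in positions i and i+1, then r_L - r_{L'} = (Π_{j=1}^{i-1}(1 - μ_{l_j})) · μ_{l_i} · μ_{l_{i+1}} · (p_{l_{i+1}} - p_{l_i}). -/
open Finset

/-- Cascade reward of ordering `l` over `K` arms (0-indexed positions). -/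
noncomputable def cascadeReward (K : ℕ) (p μ : ℕ → ℝ) (l : ℕ → ℕ) : ℝ :=
  ∑ i ∈ Finset.range K, (1 - p (l i)) * μ (l i) * ∏ j ∈ Finset.range i, (1 - μ (l j))

lemma aux_prod_swap (μ : ℕ → ℝ) (l l' : ℕ → ℕ) (i : ℕ)
    (hl' : ∀ j, l' j = if j = i then l (i + 1) else if j = i + 1 then l i else l j)
    (j : ℕ) (hj : i + 1 < j) :
    ∏ k ∈ Finset.range j, (1 - μ (l' k)) = ∏ k ∈ Finset.range j, (1 - μ (l k)) := by
  apply Finset.prod_equiv (Equiv.swap i (i+1))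
  · intro k
    simp only [Finset.mem_range, Equiv.swap_apply_def]
    split_ifs <;> omega
  · intro k hk
    rw [hl', Equiv.swap_apply_def]
    split_ifs <;> simp_all

lemma aux_prod_lt (μ : ℕ → ℝ) (l l' : ℕ → ℕ) (i : ℕ)
    (hl' : ∀ j, l' j = if j = i then l (i + 1) else if j = i + 1 then l i else l j)
    (j : ℕ) (hj : j ≤ i) :
    ∏ k ∈ Finset.range j, (1 - μ (l' k)) = ∏ k ∈ Finset.range j, (1 - μ (l k)) := by
  apply Finset.prod_congr rfl
  intro k hk
  simp only [Finset.mem_range] at hk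
  rw [hl']
  have h1 : k ≠ i := by omega
  have h2 : k ≠ i + 1 := by omega
  simp [h1, h2]

theorem stmt0_adjacent_swap_identity (K : ℕ) (hK : 1 ≤ K) (p μ : ℕ → ℝ)
    (hμ : ∀ a, 0 ≤ μ a ∧ μ a ≤ 1) (hp : ∀ a, 0 ≤ p a ∧ p a ≤ 1)
    (l : ℕ → ℕ) (i : ℕ) (hi : i + 1 < K)
    (l' : ℕ → ℕ)
    (hl' : ∀ j, l' j = if j = i then l (i + 1) else if j = i + 1 then l i else l j) :
    cascadeReward K p μ l - cascadeReward K p μ l' =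
      (∏ j ∈ Finset.range i, (1 - μ (l j))) * μ (l i) * μ (l (i + 1)) *
        (p (l (i + 1)) - p (l i)) := by
  unfold cascadeReward
  rw [← Finset.sum_sub_distrib]
  have hsplit : Finset.range K = Finset.Ico 0 (i+2) ∪ Finset.Ico (i+2) K := by
    rw [Finset.range_eq_Ico, Finset.Ico_union_Ico_eq_Ico (by omega) (by omega)]
  rw [hsplit, Finset.sum_union (by
    apply Finset.Ico_disjoint_Ico_consecutive)]
  have htail : ∑ j ∈ Finset.Ico (i+2) K,
      ((1 - p (l j)) * μ (l j) * ∏ k ∈ Finset.range j, (1 - μ (l k)) -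
       (1 - p (l' j)) * μ (l' j) * ∏ k ∈ Finset.range j, (1 - μ (l' k))) = 0 := by
    apply Finset.sum_eq_zero
    intro j hj
    simp only [Finset.mem_Ico] at hj
    have hjl : l' j = l j := by
      rw [hl']; have h1 : j ≠ i := by omega
      have h2 : j ≠ i + 1 := by omega
      simp [h1, h2]
    rw [hjl, aux_prod_swap μ l l' i hl' j (by omega)]
    ring
  rw [htail, add_zero]
  have hhead : ∑ j ∈ Finset.Ico 0 i,
      ((1 - p (l j)) * μ (l j) * ∏ k ∈ Finset.range j, (1 - μ (l k)) -
       (1 - p (l' j)) * μ (l' j) * ∏ k ∈ Finset.range j, (1 - μ (l' k))) = 0 := by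
    apply Finset.sum_eq_zero
    intro j hj
    simp only [Finset.mem_Ico] at hj
    have hjl : l' j = l j := by
      rw [hl']; have h1 : j ≠ i := by omega
      have h2 : j ≠ i + 1 := by omega
      simp [h1, h2]
    rw [hjl, aux_prod_lt μ l l' i hl' j (by omega)]
    ring
  have : Finset.Ico 0 (i+2) = Finset.Ico 0 i ∪ Finset.Ico i (i+2) := by
    rw [Finset.Ico_union_Ico_eq_Ico (by omega) (by omega)]
  rw [this, Finset.sum_union (Finset.Ico_disjoint_Ico_consecutive _ _ _), hhead, zero_add]
  have hpair : Finset.Ico i (i+2) = {i, i+1} := by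
    ext x; simp [Finset.mem_Ico]; omega
  rw [hpair, Finset.sum_pair (by omega)]
  have e1 : l' i = l (i + 1) := by rw [hl']; simp
  have e2 : l' (i + 1) = l i := by
    rw [hl']; simp [(by omega : i + 1 ≠ i)]
  rw [e1, e2, aux_prod_lt μ l l' i hl' i le_rfl,
    Finset.prod_range_succ, Finset.prod_range_succ,
    aux_prod_lt μ l l' i hl' i le_rfl, e1]
  ring
end

section
/- Let α_1, α_2, α_3 > 0 be constants and let f : ℕ → ℝ satisfy 0 ≤ f(t) ≤ t for all t. Then the function g(t) = α_1 f(t) + α_2 e^{-α_3 f(t)} (t - f(t)) is Ω(log t), i.e., there exist c > 0 and T_0 such that g(t) ≥ c · log t for all t ≥ T_0. -/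
open Real Filter Asymptotics

theorem stmt3_omega_log (α₁ α₂ α₃ : ℝ) (hα₁ : 0 < α₁) (hα₂ : 0 < α₂) (hα₃ : 0 < α₃)
    (f : ℕ → ℝ) (hf : ∀ t : ℕ, 0 ≤ f t ∧ f t ≤ t) :
    ∃ c > 0, ∃ T₀ : ℕ, ∀ t ≥ T₀,
      α₁ * f t + α₂ * Real.exp (-α₃ * f t) * (t - f t) ≥ c * Real.log t := by
  refine ⟨min (α₁/(2*α₃)) 1, lt_min (by positivity) one_pos, ?_⟩
  have hA : ∀ᶠ x : ℝ in atTop, Real.log x ≤ α₃ * x := by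
    filter_upwards [(isLittleO_log_id_atTop.def hα₃), eventually_ge_atTop (1:ℝ)] with x h1 h2
    calc Real.log x ≤ ‖Real.log x‖ := le_abs_self _
    _ ≤ α₃ * ‖id x‖ := h1
    _ = α₃ * x := by rw [Real.norm_eq_abs, id, abs_of_nonneg (by linarith)]
  have hB : ∀ᶠ x : ℝ in atTop, Real.log x ≤ (α₂/2) * x ^ ((1:ℝ)/2) := by
    filter_upwards [((isLittleO_log_rpow_atTop (by norm_num : (0:ℝ) < 1/2)).def (by positivity : (0:ℝ) < α₂/2)), eventually_ge_atTop (1:ℝ)] with x h1 h2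
    calc Real.log x ≤ ‖Real.log x‖ := le_abs_self _
    _ ≤ (α₂/2) * ‖x ^ ((1:ℝ)/2)‖ := h1
    _ = (α₂/2) * x ^ ((1:ℝ)/2) := by
        rw [Real.norm_eq_abs, abs_of_nonneg (Real.rpow_nonneg (by linarith) _)]
  have hN : ∀ᶠ t : ℕ in atTop,
      Real.log t ≤ α₃ * t ∧ Real.log t ≤ (α₂/2) * (t:ℝ) ^ ((1:ℝ)/2) ∧ 1 ≤ t := by
    filter_upwards [tendsto_natCast_atTop_atTop.eventually hA,
      tendsto_natCast_atTop_atTop.eventually hB, eventually_ge_atTop 1] with t h1 h2 h3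
    exact ⟨h1, h2, h3⟩
  obtain ⟨T₀, hT₀⟩ := eventually_atTop.mp hN
  refine ⟨T₀, fun t ht => ?_⟩
  obtain ⟨h1, h2, h3⟩ := hT₀ t ht
  obtain ⟨hf0, hf1⟩ := hf t
  have ht1 : (1:ℝ) ≤ t := by exact_mod_cast h3
  have htpos : (0:ℝ) < t := by linarith
  have hlog0 : 0 ≤ Real.log t := Real.log_nonneg ht1
  set c := min (α₁/(2*α₃)) 1 with hc
  have hc1 : c ≤ α₁/(2*α₃) := min_le_left _ _
  have hc2 : c ≤ 1 := min_le_right _ _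
  by_cases hcase : Real.log t / (2*α₃) ≤ f t
  · have h4 : α₁ * f t ≥ (α₁/(2*α₃)) * Real.log t := by
      rw [div_mul_eq_mul_div, ge_iff_le, div_le_iff₀ (by positivity)]
      calc α₁ * Real.log t = α₁ * (2*α₃) * (Real.log t / (2*α₃)) := by
            field_simp
      _ ≤ α₁ * (2*α₃) * f t := by
            apply mul_le_mul_of_nonneg_left hcase (by positivity)
      _ = α₁ * f t * (2*α₃) := by ring
    have h5 : 0 ≤ α₂ * Real.exp (-α₃ * f t) * (t - f t) := by
      apply mul_nonneg (by positivity); linarith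
    have : (α₁/(2*α₃)) * Real.log t ≥ c * Real.log t :=
      mul_le_mul_of_nonneg_right hc1 hlog0
    linarith
  · push_neg at hcase
    have hexp : Real.exp (-α₃ * f t) ≥ (t:ℝ) ^ (-(1:ℝ)/2) := by
      rw [Real.rpow_def_of_pos htpos, ge_iff_le, Real.exp_le_exp]
      have : α₃ * f t ≤ Real.log t / 2 := by
        have := mul_lt_mul_of_pos_left hcase hα₃
        calc α₃ * f t ≤ α₃ * (Real.log t / (2*α₃)) := by nlinarith
        _ = Real.log t / 2 := by field_simp
      linarith
    have hft : f t ≤ (t:ℝ)/2 := by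
      have : Real.log t / (2*α₃) ≤ t/2 := by
        rw [div_le_div_iff₀ (by positivity) (by norm_num)]
        nlinarith
      linarith
    have hhalf : (t:ℝ)/2 ≤ t - f t := by linarith
    have key : α₂ * Real.exp (-α₃ * f t) * (t - f t) ≥ (α₂/2) * (t:ℝ) ^ ((1:ℝ)/2) := by
      have h6 : α₂ * Real.exp (-α₃ * f t) * (t - f t) ≥ α₂ * ((t:ℝ) ^ (-(1:ℝ)/2)) * (t/2) := by
        apply mul_le_mul (mul_le_mul_of_nonneg_left hexp hα₂.le) hhalf (by positivity)
        positivity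
      have h7 : α₂ * ((t:ℝ) ^ (-(1:ℝ)/2)) * (t/2) = (α₂/2) * (t:ℝ) ^ ((1:ℝ)/2) := by
        have : (t:ℝ) ^ (-(1:ℝ)/2) * t = (t:ℝ) ^ ((1:ℝ)/2) := by
          rw [← Real.rpow_add_one htpos.ne']; norm_num
        calc α₂ * ((t:ℝ) ^ (-(1:ℝ)/2)) * (t/2) = (α₂/2) * ((t:ℝ) ^ (-(1:ℝ)/2) * t) := by ring
        _ = (α₂/2) * (t:ℝ) ^ ((1:ℝ)/2) := by rw [this]
      linarith
    have h8 : c * Real.log t ≤ Real.log t :=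
      mul_le_of_le_one_left hlog0 hc2
    have h9 : 0 ≤ α₁ * f t := by positivity
    linarith
end

section
/- Commit-phase lower bound composition: let T_s ∈ [0, T], δ ≥ e^{-β T_s} for a constant β > 0, and Δ̃_min > 0. Then the total regret R(T) ≥ ((K-1)/K) T_s Δ̃_min + e^{-β T_s} (T - T_s - 1) Δ̃_min is Ω(log T): there is a constant c > 0 (depending on K, β, Δ̃_min but not T) such that for all sufficiently large T, the right-hand side (minimized over T_s ∈ [0, T]) is at least c log T. -/
/-!
Split at the exploration length `s₀ = log T / (2β)`. A longer exploration pays at least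
`a s₀ ∝ log T` in the first term. A shorter one leaves `exp (-β s) ≥ T ^ (-1/2)`, so the second
term is at least `T ^ (-1/2) · T / 2 = exp (log T / 2) / 2 ≥ log T / 4`, using
`T - s - 1 ≥ T / 2` because `log T = o(T)`.
-/

open Real Filter Asymptotics

lemma neg_one_le_exp_neg_mul_mul_sub {β s T : ℝ} (hβ : 0 ≤ β) (hs : 0 ≤ s) (hsT : s ≤ T) :
    -1 ≤ exp (-β * s) * (T - s - 1) := by
  have hexp_le : exp (-β * s) ≤ 1 := exp_le_one_iff.mpr (by nlinarith)
  nlinarith [exp_pos (-β * s)]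

lemma half_log_le_exp_neg_half_log_mul {T : ℝ} (hT : 0 < T) :
    log T / 2 ≤ exp (-(log T / 2)) * T := by
  have h : exp (-(log T / 2)) * T = exp (log T / 2) := by
    rw [← exp_log hT, ← exp_add, log_exp]
    ring_nf
  rw [h]
  linarith [add_one_le_exp (log T / 2)]

lemma eventually_log_div_add_le_half {b d : ℝ} : ∀ᶠ T in atTop, log T / b + d ≤ T / 2 := by
  have h : (fun T => log T / b + d) =o[atTop] id :=
    ((isLittleO_log_id_atTop.const_mul_left b⁻¹).congr_left fun T => inv_mul_eq_div b (log T)).add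
      (isLittleO_const_id_atTop d)
  filter_upwards [h.bound (by norm_num : (0 : ℝ) < 1 / 2), eventually_ge_atTop 0] with T hT hT0
  rw [norm_eq_abs, norm_eq_abs, id, abs_of_nonneg hT0] at hT
  linarith [le_abs_self (log T / b + d)]

lemma le_linear_add_exp_of_log_div_le {a β s T : ℝ} (ha : 0 ≤ a) (hβ : 0 < β) (hs : 0 ≤ s)
    (hsT : s ≤ T) (hlog : log T / (2 * β) ≤ s) :
    a * (log T / (2 * β)) - 1 ≤ a * s + exp (-β * s) * (T - s - 1) := by
  nlinarith [mul_le_mul_of_nonneg_left hlog ha, neg_one_le_exp_neg_mul_mul_sub hβ.le hs hsT]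

lemma log_div_four_le_linear_add_exp_of_lt_log_div {a β s T : ℝ} (ha : 0 ≤ a) (hβ : 0 < β)
    (hs : 0 ≤ s) (hT : 0 < T) (hgap : T / 2 ≤ T - s - 1) (hlog : s < log T / (2 * β)) :
    log T / 4 ≤ a * s + exp (-β * s) * (T - s - 1) := by
  have hexp : exp (-(log T / 2)) ≤ exp (-β * s) := by
    rw [exp_le_exp, neg_mul, neg_le_neg_iff]
    rw [lt_div_iff₀ (by positivity)] at hlog
    linarith
  have hsecond : exp (-(log T / 2)) * (T / 2) ≤ exp (-β * s) * (T - s - 1) :=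
    mul_le_mul hexp hgap (by positivity) (exp_pos _).le
  nlinarith [half_log_le_exp_neg_half_log_mul hT, mul_nonneg ha hs]

theorem exists_eventually_mul_log_le_linear_add_exp {a β : ℝ} (ha : 0 < a) (hβ : 0 < β) :
    ∃ c > 0, ∀ᶠ T in atTop, ∀ s, 0 ≤ s → s ≤ T →
      c * log T ≤ a * s + exp (-β * s) * (T - s - 1) := by
  refine ⟨min (a / (4 * β)) (1 / 4), by positivity, ?_⟩
  filter_upwards [tendsto_log_atTop.eventually_ge_atTop (4 * β / a),
    eventually_log_div_add_le_half (b := 2 * β) (d := 1), eventually_gt_atTop 0]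
    with T hlogT hgapT hT s hs hsT
  have hlog_nonneg : 0 ≤ log T := le_trans (by positivity) hlogT
  rcases le_or_gt (log T / (2 * β)) s with hlong | hshort
  · calc min (a / (4 * β)) (1 / 4) * log T ≤ a / (4 * β) * log T :=
          mul_le_mul_of_nonneg_right (min_le_left _ _) hlog_nonneg
      _ ≤ a * (log T / (2 * β)) - 1 := by
          rw [div_le_iff₀ ha] at hlogT
          field_simp
          linarith
      _ ≤ _ := le_linear_add_exp_of_log_div_le ha.le hβ hs hsT hlong
  · calc min (a / (4 * β)) (1 / 4) * log T ≤ 1 / 4 * log T :=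
          mul_le_mul_of_nonneg_right (min_le_right _ _) hlog_nonneg
      _ = log T / 4 := by ring
      _ ≤ _ := log_div_four_le_linear_add_exp_of_lt_log_div ha.le hβ hs hT (by linarith) hshort

theorem stmt18_commit_lower_bound (K : ℕ) (hK : 2 ≤ K) (β Δmin : ℝ)
    (hβ : 0 < β) (hΔmin : 0 < Δmin) :
    ∃ c > 0, ∃ T₀ : ℝ, ∀ T ≥ T₀, ∀ Ts : ℝ, 0 ≤ Ts → Ts ≤ T →
      ((K - 1 : ℝ) / K) * Ts * Δmin + Real.exp (-β * Ts) * (T - Ts - 1) * Δmin ≥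
        c * Real.log T := by
  have hK' : (1 : ℝ) < K := by exact_mod_cast hK
  have ha : 0 < ((K - 1 : ℝ) / K) := div_pos (by linarith) (by linarith)
  obtain ⟨c, hc, hbound⟩ := exists_eventually_mul_log_le_linear_add_exp ha hβ
  obtain ⟨T₀, hT₀⟩ := eventually_atTop.mp hbound
  refine ⟨Δmin * c, by positivity, T₀, fun T hT Ts hTs hTsT => ?_⟩
  have h := mul_le_mul_of_nonneg_left (hT₀ T hT Ts hTs hTsT) hΔmin.le
  linarith
end
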